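/- Barycentric contiguity lemma: let K be a finite simplicial complex and let f: (K\{∅}) → (K\{∅}) be an order-reversing-squared map, i.e., f = φ∘ψ where ψ, φ are order-reversing maps between posets of nonempty simplices, such that σ ⊆ f(σ) for all σ, and whenever σ ≠ f(σ), then f(η) = f(σ) for all nonempty η ⊆ σ. Then the induced simplicial map F on the barycentric subdivision S(K) (sending a flag {η_1 ⊂ ⋯ ⊂ η_s} to {f(η_1) ⊆ ⋯ ⊆ f(η_s)} with repetitions removed) has the property that for every simplex V of S(K), V and F(V) are faces of a common simplex of S(K); consequently |F| is homotopic to the identity on |K|. -/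

import Mathlib

/-!
Along a flag `η₁ ⊂ ⋯ ⊂ ηₛ` the simplices `ηᵢ` and `f(ηⱼ)` are pairwise comparable: `f` is
monotone as a composite of two order-reversing maps, `ηᵢ ⊆ ηⱼ ⊆ f(ηⱼ)` when `i ≤ j`, and when
`ηⱼ ⊆ ηᵢ` either `f(ηᵢ) = ηᵢ`, so `f(ηⱼ) ⊆ f(ηᵢ) = ηᵢ`, or `f` collapses `ηᵢ`, so
`ηᵢ ⊆ f(ηᵢ) = f(ηⱼ)`. Hence a flag and its image span a common flag, i.e. `F` is contiguous
to the identity, and the straight-line homotopy between `|F|` and the identity stays inside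
`|S(K)|`.
-/

variable {V U : Type} [Fintype V] [DecidableEq V]

/-- A simplicial complex: a family of finite subsets closed under taking subsets. -/
def IsSimplicialComplex (K : Set (Finset V)) : Prop :=
  ∀ σ ∈ K, ∀ τ ⊆ σ, τ ∈ K

/-- The barycentric subdivision `S(K)`: its vertices are the nonempty simplices of `K`
and its simplices are the flags (chains under inclusion) of such. -/
def barycentricSubdivision (K : Set (Finset V)) : Set (Finset (Finset V)) :=
  {F | (∀ s ∈ F, s ∈ K ∧ s ≠ ∅) ∧ ∀ s ∈ F, ∀ t ∈ F, s ⊆ t ∨ t ⊆ s}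

/-- The geometric realization of a simplicial complex `L` on a finite vertex set `W`. -/
abbrev geomReal {W : Type} [Fintype W] (L : Set (Finset W)) : Type :=
  {g : W → ℝ // (∀ v, 0 ≤ g v) ∧ (∑ v, g v) = 1 ∧ ∃ s ∈ L, ∀ v, g v ≠ 0 → v ∈ s}

section Contiguity

variable {W : Type} [Fintype W] {L : Set (Finset W)}

def geomReal.InCommonSimplex (x y : geomReal L) : Prop :=
  ∃ s ∈ L, (∀ v, x.1 v ≠ 0 → v ∈ s) ∧ ∀ v, y.1 v ≠ 0 → v ∈ s

def geomReal.convexComb (x y : geomReal L) (hxy : geomReal.InCommonSimplex x y)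
    (t : unitInterval) : geomReal L where
  val v := (1 - (t : ℝ)) * x.1 v + t * y.1 v
  property := by
    obtain ⟨s, hs, hxs, hys⟩ := hxy
    refine ⟨fun v => add_nonneg (mul_nonneg (sub_nonneg.2 t.2.2) (x.2.1 v))
      (mul_nonneg t.2.1 (y.2.1 v)), ?_, s, hs, fun v hv => ?_⟩
    · rw [Finset.sum_add_distrib, ← Finset.mul_sum, ← Finset.mul_sum, x.2.2.1, y.2.2.1]
      ring
    · by_cases hxv : x.1 v = 0
      · exact hys v fun hyv => hv (by simp [hxv, hyv])
      · exact hxs v hxv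

theorem geomReal.homotopic_of_inCommonSimplex {X : Type*} [TopologicalSpace X]
    (g h : C(X, geomReal L)) (hgh : ∀ x, geomReal.InCommonSimplex (g x) (h x)) :
    g.Homotopic h :=
  ⟨{ toFun := fun p => geomReal.convexComb (g p.2) (h p.2) (hgh p.2) p.1
     continuous_toFun := by
       have hcoord (k : C(X, geomReal L)) (v : W) : Continuous fun x => (k x).1 v :=
         (continuous_apply v).comp (continuous_subtype_val.comp k.continuous)
       refine (continuous_pi fun v => ?_).subtype_mk _
       have := hcoord g v
       have := hcoord h v
       fun_prop
     map_zero_left := fun x => by ext v; simp [geomReal.convexComb]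
     map_one_left := fun x => by ext v; simp [geomReal.convexComb] }⟩

end Contiguity

section Flags

variable {α : Type} {K : Set (Finset α)} {f : Finset α → Finset α}

theorem apply_subset_or_subset_of_subset
    (hmono : ∀ a b, a ∈ K → b ∈ K → a.Nonempty → a ⊆ b → f a ⊆ f b)
    (hsub : ∀ s ∈ K, s.Nonempty → s ⊆ f s)
    (hcollapse : ∀ s ∈ K, s.Nonempty → f s ≠ s → ∀ η ⊆ s, η.Nonempty → f η = f s)
    {a b : Finset α} (haK : a ∈ K) (hbK : b ∈ K) (ha : a.Nonempty) (hb : b.Nonempty)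
    (hab : a ⊆ b) : f a ⊆ b ∨ b ⊆ f a := by
  by_cases hfix : f b = b
  · exact Or.inl (hfix ▸ hmono a b haK hbK ha hab)
  · exact Or.inr (hcollapse b hbK hb hfix a hab ha ▸ hsub b hbK hb)

theorem union_image_mem_barycentricSubdivision [DecidableEq α]
    (hmono : ∀ a b, a ∈ K → b ∈ K → a.Nonempty → a ⊆ b → f a ⊆ f b)
    (hmem : ∀ s ∈ K, s.Nonempty → f s ∈ K ∧ (f s).Nonempty)
    (hsub : ∀ s ∈ K, s.Nonempty → s ⊆ f s)
    (hcollapse : ∀ s ∈ K, s.Nonempty → f s ≠ s → ∀ η ⊆ s, η.Nonempty → f η = f s)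
    {F : Finset (Finset α)} (hF : F ∈ barycentricSubdivision K) :
    F ∪ F.image f ∈ barycentricSubdivision K := by
  obtain ⟨hFK, hchain⟩ := hF
  have hK : ∀ s ∈ F, s ∈ K := fun s hs => (hFK s hs).1
  have hne : ∀ s ∈ F, s.Nonempty := fun s hs => Finset.nonempty_iff_ne_empty.2 (hFK s hs).2
  have hcross : ∀ s ∈ F, ∀ b ∈ F, s ⊆ f b ∨ f b ⊆ s := fun s hs b hb =>
    (hchain s hs b hb).elim (fun hsb => Or.inl (hsb.trans (hsub b (hK b hb) (hne b hb))))
      fun hbs => (apply_subset_or_subset_of_subset hmono hsub hcollapse (hK b hb) (hK s hs)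
        (hne b hb) (hne s hs) hbs).symm
  refine ⟨fun s hs => ?_, fun s hs t ht => ?_⟩
  · rcases Finset.mem_union.1 hs with hs | hs
    · exact hFK s hs
    · obtain ⟨a, ha, rfl⟩ := Finset.mem_image.1 hs
      obtain ⟨hfaK, hfa⟩ := hmem a (hK a ha) (hne a ha)
      exact ⟨hfaK, hfa.ne_empty⟩
  rcases Finset.mem_union.1 hs with hs | hs <;> rcases Finset.mem_union.1 ht with ht | ht
  · exact hchain s hs t ht
  · obtain ⟨b, hb, rfl⟩ := Finset.mem_image.1 ht
    exact hcross s hs b hb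
  · obtain ⟨a, ha, rfl⟩ := Finset.mem_image.1 hs
    exact (hcross t ht a ha).symm
  · obtain ⟨a, ha, rfl⟩ := Finset.mem_image.1 hs
    obtain ⟨b, hb, rfl⟩ := Finset.mem_image.1 ht
    exact (hchain a ha b hb).imp (hmono a b (hK a ha) (hK b hb) (hne a ha))
      (hmono b a (hK b hb) (hK a ha) (hne b hb))

end Flags

theorem barycentric_contiguity_general (K : Set (Finset V))
    (f : Finset V → Finset V) (ψ : Finset V → Finset U) (φ : Finset U → Finset V)
    (hψ : ∀ s t : Finset V, s ∈ K → t ∈ K → s.Nonempty → s ⊆ t → ψ t ⊆ ψ s)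
    (hφ : ∀ a b : Finset U, a ⊆ b → φ b ⊆ φ a)
    (hfψφ : ∀ s, f s = φ (ψ s))
    (hmem : ∀ s ∈ K, s.Nonempty → f s ∈ K ∧ (f s).Nonempty)
    (hsub : ∀ s ∈ K, s.Nonempty → s ⊆ f s)
    (hcollapse : ∀ s ∈ K, s.Nonempty → f s ≠ s → ∀ η ⊆ s, η.Nonempty → f η = f s) :
    (∀ F ∈ barycentricSubdivision K, ∃ W ∈ barycentricSubdivision K,
        F ⊆ W ∧ F.image f ⊆ W) ∧
      ∀ h : C(geomReal (barycentricSubdivision K), geomReal (barycentricSubdivision K)),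
        (∀ (x : geomReal (barycentricSubdivision K)) (w : Finset V),
          (h x).1 w = ∑ v ∈ Finset.univ.filter (fun v => f v = w), x.1 v) →
        h.Homotopic (ContinuousMap.id _) := by
  have hmono : ∀ a b, a ∈ K → b ∈ K → a.Nonempty → a ⊆ b → f a ⊆ f b :=
    fun a b haK hbK ha hab => by
      rw [hfψφ, hfψφ]
      exact hφ _ _ (hψ a b haK hbK ha hab)
  have hflag : ∀ F ∈ barycentricSubdivision K, ∃ W ∈ barycentricSubdivision K,
      F ⊆ W ∧ F.image f ⊆ W := fun F hF =>
    ⟨F ∪ F.image f, union_image_mem_barycentricSubdivision hmono hmem hsub hcollapse hF,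
      Finset.subset_union_left, Finset.subset_union_right⟩
  refine ⟨hflag, fun h hform => geomReal.homotopic_of_inCommonSimplex h _ fun x => ?_⟩
  obtain ⟨F, hF, hxF⟩ := x.2.2.2
  obtain ⟨W, hW, hFW, hfFW⟩ := hflag F hF
  refine ⟨W, hW, fun w hw => ?_, fun w hw => hFW (hxF w hw)⟩
  rw [hform] at hw
  obtain ⟨v, hv, hxv⟩ := Finset.exists_ne_zero_of_sum_ne_zero hw
  exact hfFW (Finset.mem_image.2 ⟨v, hxF v hxv, (Finset.mem_filter.1 hv).2⟩)

/-- barycentric contiguity lemma: let `f = φ ∘ ψ` with `ψ`, `φ`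
order-reversing, `σ ⊆ f(σ)` for every nonempty simplex `σ` of `K`, and `f(η) = f(σ)`
for all nonempty `η ⊆ σ` whenever `f(σ) ≠ σ`.  Then for every simplex `V` of the
barycentric subdivision `S(K)`, `V` and its image flag are faces of a common simplex of
`S(K)`; consequently the induced piecewise-linear map `|F|` on `|S(K)|`
(which sends `x` to `w ↦ Σ_{f(v)=w} x_v`) is homotopic to the identity. -/
theorem barycentric_contiguity (K : Set (Finset V)) (hK : IsSimplicialComplex K)
    (f : Finset V → Finset V) (ψ : Finset V → Finset U) (φ : Finset U → Finset V)
    (hψ : ∀ s t : Finset V, s ∈ K → t ∈ K → s.Nonempty → s ⊆ t → ψ t ⊆ ψ s)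
    (hφ : ∀ a b : Finset U, a ⊆ b → φ b ⊆ φ a)
    (hfψφ : ∀ s, f s = φ (ψ s))
    (hmem : ∀ s ∈ K, s.Nonempty → f s ∈ K ∧ (f s).Nonempty)
    (hsub : ∀ s ∈ K, s.Nonempty → s ⊆ f s)
    (hcollapse : ∀ s ∈ K, s.Nonempty → f s ≠ s → ∀ η ⊆ s, η.Nonempty → f η = f s) :
    (∀ F ∈ barycentricSubdivision K, ∃ W ∈ barycentricSubdivision K,
        F ⊆ W ∧ F.image f ⊆ W) ∧
      ∀ h : C(geomReal (barycentricSubdivision K), geomReal (barycentricSubdivision K)),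
        (∀ (x : geomReal (barycentricSubdivision K)) (w : Finset V),
          (h x).1 w = ∑ v ∈ Finset.univ.filter (fun v => f v = w), x.1 v) →
        h.Homotopic (ContinuousMap.id _) :=
  barycentric_contiguity_general K f ψ φ hψ hφ hfψφ hmem hsub hcollapse
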